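/- Let S ⊂ [m]×[n], U ∈ ℝ^{m×n}, and let X be a Lagrange critical point of d_U on 𝓛_r^S: M_{I,J}(X) = 0 for all |I|=|J|=r+1, x_{ij} = 0 for (i,j) ∈ S, and u_{ij} − x_{ij} = Σ_{I,J} λ_{I,J} ∂M_{I,J}/∂x_{ij}(X) + Σ_{(k,l)∈S} μ_{kl} δ_{(i,j),(k,l)} for some multipliers λ, μ. Let A ⊂ [m], B ⊂ [n] with |A| = |B| ≥ m−r+1 and S ∩ (A×B) = ∅. Then the minor M_{A,B}(U − X) = 0. -/

import Mathlib

open Matrix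
open scoped Classical

/-- The minor with rows `I` and columns `J` of an `m × n` complex matrix; it is `0` by
convention when `|I| ≠ |J|`. -/
noncomputable def minorC {m n : ℕ} (Y : Matrix (Fin m) (Fin n) ℂ)
    (I : Finset (Fin m)) (J : Finset (Fin n)) : ℂ :=
  if h : I.card = J.card then
    (Y.submatrix (⇑(I.orderEmbOfFin rfl)) (⇑(J.orderEmbOfFin h.symm))).det
  else 0

/-- The minor `M_{I,J}` as a function of the `m·n` matrix entries. -/
noncomputable def minorFun {m n : ℕ} (I : Finset (Fin m)) (J : Finset (Fin n)) :
    (Fin m × Fin n → ℂ) → ℂ :=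
  fun Y => minorC (Matrix.of fun a b => Y (a, b)) I J

/-!
The `(r+1)`-minors of `X` vanish exactly when `rank X ≤ r`. Let `N = Σ λ_{I,J} ∇M_{I,J}(X)`;
it agrees with `U − X` on `A × B`. Along the curve `X (1 + t E)` the rank stays `≤ r`, so every
`(r+1)`-minor vanishes identically there and its derivative at `X` in the direction `X E` is zero;
for `E` a matrix unit this says `Xᵀ N = 0`, hence `rank N ≤ m − rank X`. If `rank X < r`, even the
curve `X + t E` has rank `≤ r`, so all the gradients `∇M_{I,J}(X)` vanish and `N = 0`. Either way
`rank N < m − r + 1 ≤ |A|`, so the `A × B` minor of `N` vanishes.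
-/

namespace Matrix

variable {K : Type*} [Field K] {m n : Type*} [Fintype n]

theorem rank_add_le (A B : Matrix m n K) : (A + B).rank ≤ A.rank + B.rank := by
  rw [rank, rank, rank, mulVecLin_add]
  exact (Submodule.finrank_mono (LinearMap.range_add_le _ _)).trans
    (Submodule.finrank_add_le_finrank_add_finrank _ _)

theorem rank_single_le [DecidableEq m] [DecidableEq n] (i : m) (j : n) (c : K) :
    (single i j c).rank ≤ 1 := by
  have hvec : single i j c = vecMulVec (Pi.single i c) (Pi.single j 1) := by
    ext k l
    simp only [single_apply, vecMulVec_apply, Pi.single_apply]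
    grind
  rw [hvec]
  exact rank_vecMulVec_le _ _

theorem exists_linearIndependent_cols_of_le_rank [Fintype m] [LinearOrder n]
    (A : Matrix m n K) {k : ℕ} (hk : k ≤ A.rank) :
    ∃ (J : Finset n) (hJ : J.card = k),
      LinearIndependent K (A.submatrix id (J.orderEmbOfFin hJ)).col := by
  obtain ⟨b, -, -, hspan, hb⟩ := exists_linearIndepOn_extension (K := K) (v := A.col)
    (linearIndepOn_empty K A.col) (Set.subset_univ (∅ : Set n))
  have hcard : k ≤ b.toFinset.card :=
    calc k ≤ A.rank := hk
      _ ≤ Module.finrank K (Submodule.span K (A.col '' b)) := by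
        rw [rank_eq_finrank_span_cols, ← Set.image_univ]
        exact Submodule.finrank_mono (Submodule.span_le.2 hspan)
      _ ≤ (b.toFinset.image A.col).card := by
        have h := finrank_span_finset_le_card (R := K) (b.toFinset.image A.col)
        rwa [Finset.coe_image, Set.coe_toFinset] at h
      _ ≤ b.toFinset.card := Finset.card_image_le
  obtain ⟨J, hJb, hJ⟩ := Finset.exists_subset_card_eq hcard
  have hJind : LinearIndepOn K A.col (J : Set n) := hb.mono (by simpa using hJb)
  exact ⟨J, hJ, hJind.comp (fun a => ⟨J.orderEmbOfFin hJ a, J.orderEmbOfFin_mem hJ a⟩)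
    fun a a' h => (J.orderEmbOfFin hJ).injective (congrArg Subtype.val h)⟩

end Matrix

section Minors

variable {m n : ℕ}

theorem minorC_eq_det {k : ℕ} (Y : Matrix (Fin m) (Fin n) ℂ) {I : Finset (Fin m)}
    {J : Finset (Fin n)} (hI : I.card = k) (hJ : J.card = k) :
    minorC Y I J = (Y.submatrix (I.orderEmbOfFin hI) (J.orderEmbOfFin hJ)).det := by
  subst hI
  rw [minorC, dif_pos hJ.symm]

theorem minorC_congr {Y Z : Matrix (Fin m) (Fin n) ℂ} {I : Finset (Fin m)} {J : Finset (Fin n)}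
    (h : ∀ a ∈ I, ∀ b ∈ J, Y a b = Z a b) : minorC Y I J = minorC Z I J := by
  unfold minorC
  split_ifs
  · congr 1
    ext a b
    exact h _ (I.orderEmbOfFin_mem _ a) _ (J.orderEmbOfFin_mem _ b)
  · rfl

theorem minorC_eq_zero_of_rank_lt {Y : Matrix (Fin m) (Fin n) ℂ} {I : Finset (Fin m)}
    {J : Finset (Fin n)} (h : Y.rank < I.card) : minorC Y I J = 0 := by
  unfold minorC
  split_ifs
  · by_contra hdet
    have hfull := (rank_of_det_ne_zero hdet).symm.trans_le (Y.rank_submatrix_le _ _)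
    rw [Fintype.card_fin] at hfull
    omega
  · rfl

theorem exists_minorC_ne_zero_of_lt_rank {r : ℕ} {Y : Matrix (Fin m) (Fin n) ℂ}
    (h : r < Y.rank) : ∃ I J, I.card = r + 1 ∧ J.card = r + 1 ∧ minorC Y I J ≠ 0 := by
  obtain ⟨J, hJ, hJind⟩ := Y.exists_linearIndependent_cols_of_le_rank h
  set Z := Y.submatrix id (J.orderEmbOfFin hJ)
  have hZ : Zᵀ.rank = r + 1 := by
    rw [← row_transpose] at hJind
    simpa using hJind.rank_matrix
  obtain ⟨I, hI, hIind⟩ := Zᵀ.exists_linearIndependent_cols_of_le_rank hZ.ge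
  refine ⟨I, J, hI, hJ, ?_⟩
  rw [minorC_eq_det Y hI hJ, ← det_transpose]
  exact ((isUnit_iff_isUnit_det _).1 (linearIndependent_cols_iff_isUnit.1 hIind)).ne_zero

theorem rank_le_of_forall_minorC_eq_zero {r : ℕ} {Y : Matrix (Fin m) (Fin n) ℂ}
    (h : ∀ (I : Finset (Fin m)) (J : Finset (Fin n)),
      I.card = r + 1 → J.card = r + 1 → minorC Y I J = 0) : Y.rank ≤ r := by
  by_contra! hr
  obtain ⟨I, J, hI, hJ, hIJ⟩ := exists_minorC_ne_zero_of_lt_rank hr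
  exact hIJ (h I J hI hJ)

theorem differentiable_minorFun (I : Finset (Fin m)) (J : Finset (Fin n)) :
    Differentiable ℂ (minorFun I J) := by
  unfold minorFun minorC
  split_ifs
  · simp only [det_apply', submatrix_apply, of_apply]
    fun_prop
  · fun_prop

theorem fderiv_minorFun_eq_zero_of_rank_le {r : ℕ} {X D : Matrix (Fin m) (Fin n) ℂ}
    {I : Finset (Fin m)} (J : Finset (Fin n)) (hI : I.card = r + 1)
    (hD : ∀ t : ℂ, (X + t • D).rank ≤ r) :
    fderiv ℂ (minorFun I J) (fun p => X p.1 p.2) (fun p => D p.1 p.2) = 0 := by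
  rw [← (differentiable_minorFun I J _).lineDeriv_eq_fderiv, lineDeriv]
  have hline : (fun t : ℂ => minorFun I J ((fun p => X p.1 p.2) + t • fun p => D p.1 p.2)) =
      fun _ => 0 :=
    funext fun t => minorC_eq_zero_of_rank_lt (Y := X + t • D) (by have := hD t; omega)
  rw [hline, deriv_const]

noncomputable def gradMatrix (f : (Fin m × Fin n → ℂ) → ℂ) (X : Matrix (Fin m) (Fin n) ℂ) :
    Matrix (Fin m) (Fin n) ℂ :=
  of fun i j => fderiv ℂ f (fun p => X p.1 p.2) (Pi.single (i, j) 1)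

theorem transpose_mul_gradMatrix_apply (f : (Fin m × Fin n → ℂ) → ℂ)
    (X : Matrix (Fin m) (Fin n) ℂ) (k j : Fin n) :
    (Xᵀ * gradMatrix f X) k j =
      fderiv ℂ f (fun p => X p.1 p.2) (fun p => (X * single k j (1 : ℂ)) p.1 p.2) := by
  have hdir : (fun p : Fin m × Fin n => (X * single k j (1 : ℂ)) p.1 p.2) =
      ∑ i, X i k • Pi.single (i, j) 1 := by
    ext ⟨i, l⟩
    by_cases hl : l = j
    · subst hl
      simp [Finset.sum_apply, Pi.single_apply]
    · simp [Finset.sum_apply, hl]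
  rw [hdir, map_sum]
  simp [mul_apply, gradMatrix]

theorem transpose_mul_gradMatrix_minorFun_eq_zero {r : ℕ} {X : Matrix (Fin m) (Fin n) ℂ}
    (hminors : ∀ (I : Finset (Fin m)) (J : Finset (Fin n)),
      I.card = r + 1 → J.card = r + 1 → minorC X I J = 0)
    {I : Finset (Fin m)} (J : Finset (Fin n)) (hI : I.card = r + 1) :
    Xᵀ * gradMatrix (minorFun I J) X = 0 := by
  ext k j
  rw [transpose_mul_gradMatrix_apply]
  refine fderiv_minorFun_eq_zero_of_rank_le J hI fun t => ?_
  calc (X + t • (X * single k j (1 : ℂ))).rank = (X * (1 + t • single k j (1 : ℂ))).rank := by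
        rw [Matrix.mul_add, Matrix.mul_one, Matrix.mul_smul]
    _ ≤ X.rank := rank_mul_le_left _ _
    _ ≤ r := rank_le_of_forall_minorC_eq_zero hminors

theorem gradMatrix_minorFun_eq_zero {r : ℕ} {X : Matrix (Fin m) (Fin n) ℂ} (hX : X.rank < r)
    {I : Finset (Fin m)} (J : Finset (Fin n)) (hI : I.card = r + 1) :
    gradMatrix (minorFun I J) X = 0 := by
  ext i j
  have hdir : (Pi.single (i, j) 1 : Fin m × Fin n → ℂ) = fun p => single i j 1 p.1 p.2 := by
    ext ⟨k, l⟩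
    simp [Pi.single_apply, single_apply, eq_comm]
  rw [gradMatrix, of_apply, hdir]
  refine fderiv_minorFun_eq_zero_of_rank_le J hI fun t => ?_
  calc (X + t • single i j 1).rank ≤ X.rank + (t • single i j (1 : ℂ)).rank := rank_add_le _ _
    _ ≤ r := by
      rw [smul_single, smul_eq_mul, mul_one]
      have := rank_single_le i j t
      omega

end Minors

theorem stmt_15_general {m n : ℕ} (r : ℕ)
    (S : Finset (Fin m × Fin n))
    (U : Matrix (Fin m) (Fin n) ℝ) (X : Matrix (Fin m) (Fin n) ℂ)
    (lam : Finset (Fin m) × Finset (Fin n) → ℂ) (mu : Fin m × Fin n → ℂ)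
    (hminors : ∀ (I : Finset (Fin m)) (J : Finset (Fin n)),
      I.card = r + 1 → J.card = r + 1 → minorC X I J = 0)
    (hlag : ∀ i j, (U i j : ℂ) - X i j =
      (∑ IJ ∈ Finset.univ.filter
          (fun IJ : Finset (Fin m) × Finset (Fin n) =>
            IJ.1.card = r + 1 ∧ IJ.2.card = r + 1),
        lam IJ *
          fderiv ℂ (minorFun IJ.1 IJ.2) (fun p => X p.1 p.2) (Pi.single (i, j) 1)) +
      ∑ p ∈ S, mu p * (if (i, j) = p then 1 else 0))
    (A : Finset (Fin m)) (B : Finset (Fin n))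
    (hcard : m - r + 1 ≤ A.card)
    (hdisj : ∀ p ∈ S, ¬(p.1 ∈ A ∧ p.2 ∈ B)) :
    minorC (U.map (Complex.ofReal) - X) A B = 0 := by
  set F := Finset.univ.filter (fun IJ : Finset (Fin m) × Finset (Fin n) =>
    IJ.1.card = r + 1 ∧ IJ.2.card = r + 1)
  set N : Matrix (Fin m) (Fin n) ℂ := ∑ IJ ∈ F, lam IJ • gradMatrix (minorFun IJ.1 IJ.2) X
  have hUX : minorC (U.map Complex.ofReal - X) A B = minorC N A B := by
    refine minorC_congr fun a ha b hb => ?_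
    rw [Matrix.sub_apply, map_apply, hlag a b, Finset.sum_eq_zero (s := S) fun p hp => ?_,
      add_zero]
    · simp [N, gradMatrix, Matrix.sum_apply]
    · rw [if_neg (by rintro rfl; exact hdisj _ hp ⟨ha, hb⟩), mul_zero]
  have hN : N.rank < A.card := by
    by_cases hX : X.rank < r
    · have hN0 : N = 0 := Finset.sum_eq_zero fun IJ hIJ => by
        rw [gradMatrix_minorFun_eq_zero hX _ (Finset.mem_filter.1 hIJ).2.1, smul_zero]
      rw [hN0, rank_zero]
      omega
    · have hXN : Xᵀ * N = 0 := by
        refine (Matrix.mul_sum _ _ _).trans (Finset.sum_eq_zero fun IJ hIJ => ?_)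
        rw [Matrix.mul_smul, transpose_mul_gradMatrix_minorFun_eq_zero hminors _
          (Finset.mem_filter.1 hIJ).2.1, smul_zero]
      have hrank := rank_add_rank_le_card_of_mul_eq_zero hXN
      rw [rank_transpose, Fintype.card_fin] at hrank
      omega
  rw [hUX, minorC_eq_zero_of_rank_lt hN]

/-- If `X` is a Lagrange critical point of `d_U` on `𝓛_r^S` and `A × B` is a block of size
`|A| = |B| ≥ m − r + 1` disjoint from the zero pattern `S`, then `M_{A,B}(U − X) = 0`. -/
theorem stmt_15 {m n : ℕ} (hmn : m ≤ n) (r : ℕ)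
    (S : Finset (Fin m × Fin n))
    (U : Matrix (Fin m) (Fin n) ℝ) (X : Matrix (Fin m) (Fin n) ℂ)
    (lam : Finset (Fin m) × Finset (Fin n) → ℂ) (mu : Fin m × Fin n → ℂ)
    (hminors : ∀ (I : Finset (Fin m)) (J : Finset (Fin n)),
      I.card = r + 1 → J.card = r + 1 → minorC X I J = 0)
    (hzero : ∀ p ∈ S, X p.1 p.2 = 0)
    (hlag : ∀ i j, (U i j : ℂ) - X i j =
      (∑ IJ ∈ Finset.univ.filter
          (fun IJ : Finset (Fin m) × Finset (Fin n) =>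
            IJ.1.card = r + 1 ∧ IJ.2.card = r + 1),
        lam IJ *
          fderiv ℂ (minorFun IJ.1 IJ.2) (fun p => X p.1 p.2) (Pi.single (i, j) 1)) +
      ∑ p ∈ S, mu p * (if (i, j) = p then 1 else 0))
    (A : Finset (Fin m)) (B : Finset (Fin n)) (hAB : A.card = B.card)
    (hcard : m - r + 1 ≤ A.card)
    (hdisj : ∀ p ∈ S, ¬(p.1 ∈ A ∧ p.2 ∈ B)) :
    minorC (U.map (Complex.ofReal) - X) A B = 0 :=
  stmt_15_general r S U X lam mu hminors hlag A B hcard hdisj
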